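/- Let (Ω, F, P) be a probability space and let p ∈ (0,1]. Let X, U, I be real-valued random variables such that: I takes values in {0,1} with E[I] = p; U is integrable with E[U] = 0; X is integrable; I and U are independent of each other; and the pair (I, U) is independent of X. Then the surrogate W = I·(X/p + U) is integrable and satisfies E[W | σ(X)] = X almost surely, where σ(X) is the σ-algebra generated by X. -/

import Mathlib

open MeasureTheory ProbabilityTheory

/-! Write `W = (X / p) · I + I · U`. Since `X / p` is `σ(X)`-measurable it pulls out of the
conditional expectation, and independence from `X` turns `E[I | σ(X)]` into `E[I] = p` and
`E[I U | σ(X)]` into `E[I U] = E[I] E[U] = 0`. -/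

theorem condExp_comap_ae_eq_integral_of_indepFun {Ω β E : Type*} {mΩ : MeasurableSpace Ω}
    {μ : Measure Ω} [IsFiniteMeasure μ] [MeasurableSpace β] [NormedAddCommGroup E]
    [NormedSpace ℝ E] [CompleteSpace E] [MeasurableSpace E] [BorelSpace E]
    [SecondCountableTopology E] {f : Ω → E} {X : Ω → β} (hX : Measurable X)
    (hf : AEStronglyMeasurable f μ) (hfX : IndepFun f X μ) :
    μ[f | MeasurableSpace.comap X inferInstance] =ᵐ[μ] fun _ => μ[f] := by
  set g := hf.mk f
  have hg : Measurable g := hf.stronglyMeasurable_mk.measurable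
  have hgX : IndepFun g X μ := hfX.congr hf.ae_eq_mk Filter.EventuallyEq.rfl
  have hg_comap : StronglyMeasurable[MeasurableSpace.comap g inferInstance] g :=
    (Measurable.of_comap_le le_rfl).stronglyMeasurable
  calc μ[f | MeasurableSpace.comap X inferInstance]
      =ᵐ[μ] μ[g | MeasurableSpace.comap X inferInstance] := condExp_congr_ae hf.ae_eq_mk
    _ =ᵐ[μ] fun _ => μ[g] := condExp_indep_eq hg.comap_le hX.comap_le hg_comap hgX
    _ = fun _ => μ[f] := by rw [integral_congr_ae hf.ae_eq_mk]

theorem surrogate_condexp_eq_general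
    {Ω : Type} [MeasureSpace Ω] [IsProbabilityMeasure (ℙ : Measure Ω)]
    (p : ℝ) (hp : p ∈ Set.Ioc (0 : ℝ) 1)
    (X U I : Ω → ℝ)
    (hXmeas : Measurable X)
    (hImean : ∫ ω, I ω ∂ℙ = p)
    (hUint : Integrable U ℙ) (hUmean : ∫ ω, U ω ∂ℙ = 0)
    (hXint : Integrable X ℙ)
    (hIU : IndepFun I U ℙ)
    (hIUX : IndepFun (fun ω => (I ω, U ω)) X ℙ) :
    Integrable (fun ω => I ω * (X ω / p + U ω)) ℙ ∧
      ℙ[fun ω => I ω * (X ω / p + U ω) | MeasurableSpace.comap X inferInstance]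
        =ᵐ[ℙ] X := by
  have hp0 : p ≠ 0 := hp.1.ne'
  have hIX : IndepFun I X ℙ := hIUX.comp measurable_fst measurable_id
  have hIUmulX : IndepFun (I * U) X ℙ :=
    hIUX.comp (measurable_fst.mul measurable_snd) measurable_id
  -- a non-integrable function has integral `0`
  have hIint : Integrable I ℙ := .of_integral_ne_zero (hImean ▸ hp0)
  have hXpI : Integrable ((fun ω => X ω / p) * I) ℙ :=
    (hIX.symm.comp (measurable_id.div_const p) measurable_id).integrable_mul
      (hXint.div_const p) hIint
  have hIUint : Integrable (I * U) ℙ := hIU.integrable_mul hIint hUint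
  have hIU_mean : ∫ ω, (I * U) ω ∂ℙ = 0 := by
    rw [hIU.integral_mul_eq_mul_integral hIint.1 hUint.1, hUmean, mul_zero]
  have hW : (fun ω => I ω * (X ω / p + U ω)) = (fun ω => X ω / p) * I + I * U := by
    funext ω; simp only [Pi.add_apply, Pi.mul_apply]; ring
  refine ⟨hW ▸ hXpI.add hIUint, ?_⟩
  have hXp : StronglyMeasurable[MeasurableSpace.comap X inferInstance] fun ω => X ω / p :=
    ((Measurable.of_comap_le le_rfl).div_const p).stronglyMeasurable
  rw [hW]
  filter_upwards [condExp_add hXpI hIUint _,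
    condExp_mul_of_stronglyMeasurable_left hXp hXpI hIint,
    condExp_comap_ae_eq_integral_of_indepFun hXmeas hIint.1 hIX,
    condExp_comap_ae_eq_integral_of_indepFun hXmeas hIUint.1 hIUmulX]
    with ω h_add h_pull h_condI h_condIU
  rw [h_add, Pi.add_apply, h_pull, Pi.mul_apply, h_condI, h_condIU, hImean, hIU_mean,
    add_zero, div_mul_cancel₀ _ hp0]

/-- Let `p ∈ (0,1]` and let `X, U, I` be real random variables on a probability space such that
`I` takes values in `{0,1}` with `E[I] = p`, `U` is integrable with `E[U] = 0`, `X` is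
integrable, `I` and `U` are independent of each other, and the pair `(I, U)` is independent of
`X`. Then the surrogate `W = I·(X/p + U)` is integrable and `E[W | σ(X)] = X` a.s. -/
theorem surrogate_condexp_eq
    {Ω : Type} [MeasureSpace Ω] [IsProbabilityMeasure (ℙ : Measure Ω)]
    (p : ℝ) (hp : p ∈ Set.Ioc (0 : ℝ) 1)
    (X U I : Ω → ℝ)
    (hXmeas : Measurable X) (hUmeas : Measurable U) (hImeas : Measurable I)
    (hI01 : ∀ ω, I ω = 0 ∨ I ω = 1)
    (hImean : ∫ ω, I ω ∂ℙ = p)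
    (hUint : Integrable U ℙ) (hUmean : ∫ ω, U ω ∂ℙ = 0)
    (hXint : Integrable X ℙ)
    (hIU : IndepFun I U ℙ)
    (hIUX : IndepFun (fun ω => (I ω, U ω)) X ℙ) :
    Integrable (fun ω => I ω * (X ω / p + U ω)) ℙ ∧
      ℙ[fun ω => I ω * (X ω / p + U ω) | MeasurableSpace.comap X inferInstance]
        =ᵐ[ℙ] X :=
  surrogate_condexp_eq_general p hp X U I hXmeas hImean hUint hUmean hXint hIU hIUX
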